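/- arXiv:2403.05368 — 3 statements merged into one kernel-verified Lean document; each statement's English description precedes it below -/
import Mathlib

section
/- Let H be a real inner product space, f, v, w₁, …, w_N ∈ H, q = K† k where K_{ij} = ⟨w_i, w_j⟩, k_i = ⟨v, w_i⟩, κ₀ = ⟨v,v⟩. Then |⟨f, v⟩ − Σᵢ qᵢ ⟨f, w_i⟩|² ≤ ‖f‖² · (κ₀ − kᵀ K† k). -/
open Matrix

/-- `P` is the Moore–Penrose pseudoinverse of `A`. -/
def IsMoorePenrose {m n : Type*} [Fintype m] [Fintype n]
    (A : Matrix m n ℝ) (P : Matrix n m ℝ) : Prop :=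
  A * P * A = A ∧ P * A * P = P ∧ (A * P)ᵀ = A * P ∧ (P * A)ᵀ = P * A

/-!
Put `q = K† k` and `r = v - ∑ i, q i • w i`. The Penrose identities `K K† K = K` and
`(K K†)ᵀ = K K†` give `K (k - K q) = 0`, and since `K` is a Gram matrix this forces
`∑ i, (k - K q) i • w i = 0`; as `(k - K q) i = ⟪w i, r⟫`, pairing with `r` yields
`∑ i, ⟪w i, r⟫ ^ 2 = 0`. So `r` is orthogonal to every `w i`, i.e. `∑ i, q i • w i` is the
orthogonal projection of `v` onto their span. Hence the error equals `⟪f, r⟫` and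
`‖r‖² = ⟪v, r⟫ = κ₀ - kᵀ K† k`, and Cauchy–Schwarz finishes.
-/

theorem IsMoorePenrose.transpose_mul_mul {m n : Type*} [Fintype m] [Fintype n]
    {A : Matrix m n ℝ} {P : Matrix n m ℝ} (h : IsMoorePenrose A P) : Aᵀ * (A * P) = Aᵀ := by
  obtain ⟨hAPA, -, hAP, -⟩ := h
  calc Aᵀ * (A * P) = Aᵀ * (A * P)ᵀ := by rw [hAP]
    _ = (A * P * A)ᵀ := (transpose_mul _ _).symm
    _ = Aᵀ := by rw [hAPA]

section Gram

variable {ι E : Type*} [NormedAddCommGroup E] [InnerProductSpace ℝ E]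

theorem transpose_gram_real (w : ι → E) : (gram ℝ w)ᵀ = gram ℝ w := by
  rw [← conjTranspose_eq_transpose_of_trivial]
  exact isHermitian_gram ℝ w

variable [Fintype ι]

theorem real_inner_sum_smul_right (x : E) (w : ι → E) (c : ι → ℝ) :
    inner ℝ x (∑ j, c j • w j) = ∑ j, c j * inner ℝ x (w j) := by
  simp only [inner_sum, real_inner_smul_right]

theorem gram_mulVec_apply_real (w : ι → E) (c : ι → ℝ) (i : ι) :
    (gram ℝ w *ᵥ c) i = inner ℝ (w i) (∑ j, c j • w j) := by
  simp only [mulVec, dotProduct, gram_apply, real_inner_sum_smul_right, mul_comm]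

theorem sum_smul_eq_zero_of_gram_mulVec_eq_zero {w : ι → E} {u : ι → ℝ}
    (h : gram ℝ w *ᵥ u = 0) : ∑ i, u i • w i = 0 := by
  rw [← inner_self_eq_zero (𝕜 := ℝ), ← star_dotProduct_gram_mulVec, h, dotProduct_zero]

theorem inner_sub_sum_smul_pinv_eq_zero {w : ι → E} {P : Matrix ι ι ℝ}
    (hP : IsMoorePenrose (gram ℝ w) P) (v : E) (i : ι) :
    inner ℝ (w i) (v - ∑ j, (P *ᵥ fun l ↦ inner ℝ v (w l)) j • w j) = 0 := by
  set k : ι → ℝ := fun l ↦ inner ℝ v (w l)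
  set r := v - ∑ j, (P *ᵥ k) j • w j
  set u : ι → ℝ := fun l ↦ inner ℝ (w l) r
  have hu : u = k - gram ℝ w *ᵥ (P *ᵥ k) := by
    ext l
    simp only [u, k, r, inner_sub_right, gram_mulVec_apply_real, Pi.sub_apply,
      real_inner_comm v]
  have hGu : gram ℝ w *ᵥ u = 0 := by
    have hGGP := hP.transpose_mul_mul
    rw [transpose_gram_real] at hGGP
    rw [hu, mulVec_sub, mulVec_mulVec, mulVec_mulVec, mul_assoc, hGGP, sub_self]
  have huu : u ⬝ᵥ u = 0 :=
    calc u ⬝ᵥ u = inner ℝ (∑ l, u l • w l) r := by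
          simp only [dotProduct, sum_inner, real_inner_smul_left, u]
      _ = 0 := by rw [sum_smul_eq_zero_of_gram_mulVec_eq_zero hGu, inner_zero_left]
  exact congrFun (dotProduct_self_eq_zero.mp huu) i

theorem real_inner_self_sub_sum_smul_of_orthogonal {w : ι → E} {v : E} {q : ι → ℝ}
    (h : ∀ i, inner ℝ (w i) (v - ∑ j, q j • w j) = 0) :
    inner ℝ (v - ∑ j, q j • w j) (v - ∑ j, q j • w j)
      = inner ℝ v v - ∑ j, q j * inner ℝ v (w j) := by
  set r := v - ∑ j, q j • w j
  calc inner ℝ r r = inner ℝ (v - ∑ j, q j • w j) r := rfl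
    _ = inner ℝ v r - ∑ j, q j * inner ℝ (w j) r := by
      rw [inner_sub_left, sum_inner]
      simp only [real_inner_smul_left]
    _ = inner ℝ v r := by simp only [h, mul_zero, Finset.sum_const_zero, sub_zero]
    _ = inner ℝ v v - ∑ j, q j * inner ℝ v (w j) := by
      rw [inner_sub_right, real_inner_sum_smul_right]

end Gram

theorem rkhs_error_bound
    {H : Type*} [NormedAddCommGroup H] [InnerProductSpace ℝ H]
    (N : ℕ) (f v : H) (w : Fin N → H)
    (K : Matrix (Fin N) (Fin N) ℝ) (k : Fin N → ℝ) (κ₀ : ℝ)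
    (Kd : Matrix (Fin N) (Fin N) ℝ) (q : Fin N → ℝ)
    (hK : ∀ i j, K i j = inner ℝ (w i) (w j))
    (hk : ∀ i, k i = inner ℝ v (w i))
    (hκ₀ : κ₀ = inner ℝ v v)
    (hKd : IsMoorePenrose K Kd)
    (hq : q = Kd.mulVec k) :
    |(inner ℝ f v : ℝ) - ∑ i, q i * (inner ℝ f (w i) : ℝ)| ^ 2
      ≤ ‖f‖ ^ 2 * (κ₀ - k ⬝ᵥ Kd.mulVec k) := by
  obtain rfl : K = gram ℝ w := Matrix.ext hK
  rw [← hq]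
  have h_orth : ∀ i, inner ℝ (w i) (v - ∑ j, q j • w j) = 0 := by
    rw [hq, show k = _ from funext hk]
    exact inner_sub_sum_smul_pinv_eq_zero hKd v
  set r := v - ∑ i, q i • w i
  have h_err : inner ℝ f v - ∑ i, q i * inner ℝ f (w i) = inner ℝ f r := by
    rw [inner_sub_right, real_inner_sum_smul_right]
  have h_var : inner ℝ r r = κ₀ - k ⬝ᵥ q := by
    rw [real_inner_self_sub_sum_smul_of_orthogonal h_orth, hκ₀, dotProduct_comm]
    simp only [dotProduct, hk]
  calc |inner ℝ f v - ∑ i, q i * inner ℝ f (w i)| ^ 2 = inner ℝ f r * inner ℝ f r := by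
        rw [h_err, sq_abs, sq]
    _ ≤ inner ℝ f f * inner ℝ r r := real_inner_mul_inner_self_le f r
    _ = ‖f‖ ^ 2 * (κ₀ - k ⬝ᵥ q) := by rw [real_inner_self_eq_norm_sq, h_var]
end

section
/- Let H be a real inner product space, v, w₁,…,w_N ∈ H, with Gram matrix K, kernel vector k (k_i = ⟨v, w_i⟩), κ₀ = ⟨v,v⟩, and posterior variance σ² = κ₀ − kᵀK†k. Let f₁, …, f_n ∈ H and define the vector-valued error e_j = ⟨f_j, v⟩ − Σᵢ (K†k)_i ⟨f_j, w_i⟩. Then Σⱼ e_j² ≤ σ² · Σⱼ ‖f_j‖². -/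
open Matrix

/-! With `c = K† k`, the error `e_j` is `⟪f_j, r⟫` for the residual `r = v - ∑ cᵢ wᵢ`, so
Cauchy–Schwarz gives `∑ e_j² ≤ ‖r‖² ∑ ‖f_j‖²`. The vector `k` lies in the range of the Gram
matrix: it is `K a` for the coefficients `a` of the orthogonal projection of `v` onto the span of
the `wᵢ`. Hence `K c = K K† K a = k`, i.e. `r ⊥ wᵢ` for all `i`, and then
`‖r‖² = ⟪v, r⟫ = κ₀ - kᵀ c = σ²`. -/

open scoped RealInnerProductSpace

theorem IsMoorePenrose.mulVec_mulVec_mulVec {m n : Type*} [Fintype m] [Fintype n]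
    {A : Matrix m n ℝ} {P : Matrix n m ℝ} (h : IsMoorePenrose A P) (a : n → ℝ) :
    A *ᵥ (P *ᵥ (A *ᵥ a)) = A *ᵥ a := by
  rw [mulVec_mulVec, mulVec_mulVec, h.1]

section Gram

variable {ι H : Type*} [Fintype ι] [NormedAddCommGroup H] [InnerProductSpace ℝ H]

theorem Matrix.gram_mulVec_apply (w : ι → H) (a : ι → ℝ) (i : ι) :
    (gram ℝ w *ᵥ a) i = ⟪w i, ∑ j, a j • w j⟫ := by
  simp [mulVec, dotProduct, gram_apply, inner_sum, real_inner_smul_right, mul_comm]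

theorem Matrix.exists_gram_mulVec_eq_inner (w : ι → H) (v : H) :
    ∃ a, gram ℝ w *ᵥ a = fun i => ⟪v, w i⟫ := by
  set S := Submodule.span ℝ (Set.range w)
  have : FiniteDimensional ℝ S := FiniteDimensional.span_of_finite ℝ (Set.finite_range w)
  obtain ⟨a, ha⟩ :=
    (Submodule.mem_span_range_iff_exists_fun ℝ).mp (S.starProjection_apply_mem v)
  refine ⟨a, funext fun i => ?_⟩
  have hwi : S.starProjection (w i) = w i :=
    S.starProjection_eq_self_iff.mpr (Submodule.subset_span ⟨i, rfl⟩)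
  rw [gram_mulVec_apply, ha, real_inner_comm, S.inner_starProjection_left_eq_right, hwi]

theorem inner_sub_sum_smul (x v : H) (w : ι → H) (c : ι → ℝ) :
    ⟪x, v - ∑ i, c i • w i⟫ = ⟪x, v⟫ - ∑ i, c i * ⟪x, w i⟫ := by
  simp [inner_sub_right, inner_sum, real_inner_smul_right]

variable {w : ι → H} {v : H} {c : ι → ℝ}

theorem inner_sub_sum_smul_eq_zero_of_gram_mulVec_eq
    (hc : gram ℝ w *ᵥ c = fun i => ⟪v, w i⟫) (i : ι) :
    ⟪w i, v - ∑ j, c j • w j⟫ = 0 := by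
  rw [inner_sub_right, ← gram_mulVec_apply, hc, real_inner_comm, sub_self]

theorem norm_sub_sum_smul_sq_of_gram_mulVec_eq
    (hc : gram ℝ w *ᵥ c = fun i => ⟪v, w i⟫) :
    ‖v - ∑ i, c i • w i‖ ^ 2 = ⟪v, v⟫ - (fun i => ⟪v, w i⟫) ⬝ᵥ c := by
  have horth : ⟪∑ i, c i • w i, v - ∑ i, c i • w i⟫ = 0 := by
    simp [sum_inner, real_inner_smul_left, inner_sub_sum_smul_eq_zero_of_gram_mulVec_eq hc]
  rw [← real_inner_self_eq_norm_sq, inner_sub_left, horth, sub_zero, inner_sub_sum_smul]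
  simp only [dotProduct, mul_comm]

theorem sum_inner_sq_le_norm_sq_mul {κ : Type*} [Fintype κ] (f : κ → H) (r : H) :
    ∑ j, ⟪f j, r⟫ ^ 2 ≤ ‖r‖ ^ 2 * ∑ j, ‖f j‖ ^ 2 := by
  rw [Finset.mul_sum]
  refine Finset.sum_le_sum fun j _ => ?_
  calc ⟪f j, r⟫ ^ 2 ≤ (‖f j‖ * ‖r‖) ^ 2 :=
        sq_le_sq.mpr ((abs_real_inner_le_norm _ _).trans (le_abs_self _))
    _ = ‖r‖ ^ 2 * ‖f j‖ ^ 2 := by ring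

end Gram

theorem multi_output_rkhs_error_bound
    {H : Type*} [NormedAddCommGroup H] [InnerProductSpace ℝ H]
    (N n : ℕ) (v : H) (w : Fin N → H) (f : Fin n → H)
    (K : Matrix (Fin N) (Fin N) ℝ) (k : Fin N → ℝ) (κ₀ : ℝ)
    (Kd : Matrix (Fin N) (Fin N) ℝ) (σsq : ℝ)
    (hK : ∀ i j, K i j = inner ℝ (w i) (w j))
    (hk : ∀ i, k i = inner ℝ v (w i))
    (hκ₀ : κ₀ = inner ℝ v v)
    (hKd : IsMoorePenrose K Kd)
    (hσ : σsq = κ₀ - k ⬝ᵥ Kd.mulVec k) :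
    ∑ j, ((inner ℝ (f j) v : ℝ) - ∑ i, (Kd.mulVec k) i * (inner ℝ (f j) (w i) : ℝ)) ^ 2
      ≤ σsq * ∑ j, ‖f j‖ ^ 2 := by
  obtain rfl : K = gram ℝ w := Matrix.ext hK
  obtain ⟨a, ha⟩ := exists_gram_mulVec_eq_inner w v
  have hc : gram ℝ w *ᵥ (Kd *ᵥ k) = k := by
    rw [funext hk, ← ha, hKd.mulVec_mulVec_mulVec]
  obtain rfl : k = fun i => ⟪v, w i⟫ := funext hk
  simp_rw [← inner_sub_sum_smul]
  rw [hσ, hκ₀, ← norm_sub_sum_smul_sq_of_gram_mulVec_eq hc]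
  exact sum_inner_sq_le_norm_sq_mul f _
end

section
/- Let A be a symmetric positive semidefinite real (N+1) × (N+1) matrix partitioned as A = [[A₁₁, A₁₂],[A₁₂ᵀ, A₂₂]] with A₁₁ of size N × N, and let L be a lower-triangular matrix with A = L Lᵀ, partitioned conformally with blocks L₁₁, L₂₁, L₂₂. Then A₂₂ − A₁₂ᵀ A₁₁† A₁₂ = L₂₁ (I − L₁₁† L₁₁) L₂₁ᵀ + L₂₂ L₂₂ᵀ; in particular the Schur complement A₂₂ − A₁₂ᵀ A₁₁† A₁₂ is positive semidefinite. -/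
/-!
Comparing blocks of `L Lᵀ` gives `A₁₁ = L₁₁L₁₁ᵀ`, `A₁₂ = L₁₁L₂₁ᵀ` and `A₂₂ = L₂₁L₂₁ᵀ + L₂₂L₂₂ᵀ`.
By uniqueness of the Moore–Penrose inverse, `A₁₁† = L₁₁†ᵀ L₁₁†`, hence
`A₁₂ᵀ A₁₁† A₁₂ = L₂₁ (L₁₁ᵀ L₁₁†ᵀ L₁₁† L₁₁) L₂₁ᵀ = L₂₁ L₁₁† L₁₁ L₂₁ᵀ`.
Positivity follows because `I - L₁₁† L₁₁` is a symmetric idempotent, i.e. an orthogonal projection.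
-/

open Matrix

namespace IsMoorePenrose

variable {m n : Type*} [Fintype m] [Fintype n] {A : Matrix m n ℝ} {P Q : Matrix n m ℝ}

theorem transpose_mul_transpose (h : IsMoorePenrose A P) : Aᵀ * Pᵀ = P * A := by
  rw [← transpose_mul, h.2.2.2]

theorem transpose_mul_transpose' (h : IsMoorePenrose A P) : Pᵀ * Aᵀ = A * P := by
  rw [← transpose_mul, h.2.2.1]

theorem unique (hP : IsMoorePenrose A P) (hQ : IsMoorePenrose A Q) : P = Q := by
  have hAP : A * P = A * Q :=
    calc A * P = (A * P)ᵀ := hP.2.2.1.symm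
      _ = (A * Q * A * P)ᵀ := by rw [hQ.1]
      _ = (A * P)ᵀ * (A * Q)ᵀ := by simp only [transpose_mul, Matrix.mul_assoc]
      _ = A * P * (A * Q) := by rw [hP.2.2.1, hQ.2.2.1]
      _ = A * Q := by rw [← Matrix.mul_assoc, hP.1]
  have hPA : P * A = Q * A :=
    calc P * A = (P * A)ᵀ := hP.2.2.2.symm
      _ = (P * (A * Q * A))ᵀ := by rw [hQ.1]
      _ = (Q * A)ᵀ * (P * A)ᵀ := by simp only [transpose_mul, Matrix.mul_assoc]
      _ = Q * A * (P * A) := by rw [hP.2.2.2, hQ.2.2.2]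
      _ = Q * A := by rw [Matrix.mul_assoc, ← Matrix.mul_assoc A P A, hP.1]
  calc P = P * A * P := hP.2.1.symm
    _ = Q * A * Q := by rw [Matrix.mul_assoc, hAP, ← Matrix.mul_assoc, hPA]
    _ = Q := hQ.2.1

theorem transpose_mul_mul_s11 (h : IsMoorePenrose A P) : Aᵀ * (Pᵀ * P) * A = P * A := by
  rw [← Matrix.mul_assoc Aᵀ, h.transpose_mul_transpose, h.2.1]

theorem mul_transpose (h : IsMoorePenrose A P) : IsMoorePenrose (A * Aᵀ) (Pᵀ * P) := by
  have right : A * Aᵀ * (Pᵀ * P) = A * P := by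
    rw [Matrix.mul_assoc, ← Matrix.mul_assoc Aᵀ, h.transpose_mul_transpose, h.2.1]
  have left : Pᵀ * P * (A * Aᵀ) = A * P := by
    rw [Matrix.mul_assoc, ← Matrix.mul_assoc P, ← h.transpose_mul_transpose, ← transpose_mul,
      ← transpose_mul, ← Matrix.mul_assoc, h.1, h.transpose_mul_transpose']
  refine ⟨?_, ?_, by rw [right, h.2.2.1], by rw [left, h.2.2.1]⟩
  · rw [right, ← Matrix.mul_assoc, h.1]
  · rw [left, ← h.transpose_mul_transpose', Matrix.mul_assoc, ← Matrix.mul_assoc Aᵀ,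
      h.transpose_mul_transpose, h.2.1]

theorem posSemidef_one_sub_mul [DecidableEq n] (h : IsMoorePenrose A P) :
    (1 - P * A).PosSemidef := by
  have idempotent : (1 - P * A) * (1 - P * A)ᵀ = 1 - P * A := by
    have square : P * A * (P * A) = P * A := by rw [← Matrix.mul_assoc, h.2.1]
    rw [transpose_sub, transpose_one, h.2.2.2, Matrix.mul_sub, Matrix.mul_one, Matrix.sub_mul,
      Matrix.one_mul, square, sub_self, sub_zero]
  rw [← idempotent, ← conjTranspose_eq_transpose_of_trivial]
  exact posSemidef_self_mul_conjTranspose (1 - P * A)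

end IsMoorePenrose

theorem fromBlocks_lower_mul_transpose {l o R : Type*} [Fintype l] [Fintype o] [CommRing R]
    (L₁₁ : Matrix l l R) (L₂₁ : Matrix o l R) (L₂₂ : Matrix o o R) :
    fromBlocks L₁₁ 0 L₂₁ L₂₂ * (fromBlocks L₁₁ 0 L₂₁ L₂₂)ᵀ =
      fromBlocks (L₁₁ * L₁₁ᵀ) (L₁₁ * L₂₁ᵀ) (L₂₁ * L₁₁ᵀ) (L₂₁ * L₂₁ᵀ + L₂₂ * L₂₂ᵀ) := by
  simp [fromBlocks_transpose, fromBlocks_multiply]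

theorem schur_complement_via_cholesky_general (N : ℕ)
    (A₁₁ : Matrix (Fin N) (Fin N) ℝ) (A₁₂ : Matrix (Fin N) (Fin 1) ℝ)
    (A₂₂ : Matrix (Fin 1) (Fin 1) ℝ)
    (L₁₁ : Matrix (Fin N) (Fin N) ℝ) (L₂₁ : Matrix (Fin 1) (Fin N) ℝ)
    (L₂₂ : Matrix (Fin 1) (Fin 1) ℝ)
    (A₁₁d : Matrix (Fin N) (Fin N) ℝ) (L₁₁d : Matrix (Fin N) (Fin N) ℝ)
    (hchol : Matrix.fromBlocks A₁₁ A₁₂ A₁₂ᵀ A₂₂ =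
      Matrix.fromBlocks L₁₁ 0 L₂₁ L₂₂ * (Matrix.fromBlocks L₁₁ 0 L₂₁ L₂₂)ᵀ)
    (hA₁₁d : IsMoorePenrose A₁₁ A₁₁d) (hL₁₁d : IsMoorePenrose L₁₁ L₁₁d) :
    A₂₂ - A₁₂ᵀ * A₁₁d * A₁₂ = L₂₁ * (1 - L₁₁d * L₁₁) * L₂₁ᵀ + L₂₂ * L₂₂ᵀ ∧
    (A₂₂ - A₁₂ᵀ * A₁₁d * A₁₂).PosSemidef := by
  rw [fromBlocks_lower_mul_transpose, fromBlocks_inj] at hchol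
  obtain ⟨rfl, rfl, -, rfl⟩ := hchol
  obtain rfl : A₁₁d = L₁₁dᵀ * L₁₁d := hA₁₁d.unique hL₁₁d.mul_transpose
  have identity : L₂₁ * L₂₁ᵀ + L₂₂ * L₂₂ᵀ - (L₁₁ * L₂₁ᵀ)ᵀ * (L₁₁dᵀ * L₁₁d) * (L₁₁ * L₂₁ᵀ) =
      L₂₁ * (1 - L₁₁d * L₁₁) * L₂₁ᵀ + L₂₂ * L₂₂ᵀ := by
    have middle :
        (L₁₁ * L₂₁ᵀ)ᵀ * (L₁₁dᵀ * L₁₁d) * (L₁₁ * L₂₁ᵀ) = L₂₁ * (L₁₁d * L₁₁) * L₂₁ᵀ := by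
      rw [transpose_mul, transpose_transpose, ← hL₁₁d.transpose_mul_mul_s11]
      simp only [Matrix.mul_assoc]
    rw [middle, Matrix.mul_sub, Matrix.sub_mul, Matrix.mul_one]
    abel
  refine ⟨identity, identity ▸ ?_⟩
  exact (hL₁₁d.posSemidef_one_sub_mul.mul_mul_conjTranspose_same L₂₁).add
    (posSemidef_self_mul_conjTranspose L₂₂)

theorem schur_complement_via_cholesky (N : ℕ)
    (A₁₁ : Matrix (Fin N) (Fin N) ℝ) (A₁₂ : Matrix (Fin N) (Fin 1) ℝ)
    (A₂₂ : Matrix (Fin 1) (Fin 1) ℝ)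
    (L₁₁ : Matrix (Fin N) (Fin N) ℝ) (L₂₁ : Matrix (Fin 1) (Fin N) ℝ)
    (L₂₂ : Matrix (Fin 1) (Fin 1) ℝ)
    (A₁₁d : Matrix (Fin N) (Fin N) ℝ) (L₁₁d : Matrix (Fin N) (Fin N) ℝ)
    (hA : (Matrix.fromBlocks A₁₁ A₁₂ A₁₂ᵀ A₂₂).PosSemidef)
    (hLtri : ∀ i j : Fin N, i < j → L₁₁ i j = 0)
    (hchol : Matrix.fromBlocks A₁₁ A₁₂ A₁₂ᵀ A₂₂ =
      Matrix.fromBlocks L₁₁ 0 L₂₁ L₂₂ * (Matrix.fromBlocks L₁₁ 0 L₂₁ L₂₂)ᵀ)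
    (hA₁₁d : IsMoorePenrose A₁₁ A₁₁d) (hL₁₁d : IsMoorePenrose L₁₁ L₁₁d) :
    A₂₂ - A₁₂ᵀ * A₁₁d * A₁₂ = L₂₁ * (1 - L₁₁d * L₁₁) * L₂₁ᵀ + L₂₂ * L₂₂ᵀ ∧
    (A₂₂ - A₁₂ᵀ * A₁₁d * A₁₂).PosSemidef :=
  schur_complement_via_cholesky_general N A₁₁ A₁₂ A₂₂ L₁₁ L₂₁ L₂₂ A₁₁d L₁₁d hchol hA₁₁d hL₁₁d
end
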